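/- For the standard skew-normal density f(z) = 2 φ(z) Φ(λ z) on ℝ, the negentropy term E[ln(2 Φ(λ W))] (with W skew-normal of shape λ) is nonnegative, and consequently S[f] ≤ S[φ] = (1/2) ln(2π e). -/

import Mathlib

/-!
Since `Φ x + Φ (-x) = 1`, the skew-normal density satisfies `f z + f (-z) = 2 φ z`.
Symmetrizing, an even function has the same integral against `f` as against `φ`, so `f` has
mass 1 and second moment 1; together with `log f z = log (2 Φ (λ z)) + log φ z` this gives
`S[f] = ½ log (2πe) - N` with `N = ∫ log (2 Φ (λ z)) f z dz`. Symmetrizing `N` pairs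
`p = Φ (λ z)` with `1 - p`, and `p log 2p + (1 - p) log 2(1 - p) ≥ 0` because
`t log 2t ≥ t - 1/2`.
-/

open MeasureTheory Real Set

noncomputable def phi (x : ℝ) : ℝ := (Real.sqrt (2 * Real.pi))⁻¹ * Real.exp (-x ^ 2 / 2)

noncomputable def Phi (x : ℝ) : ℝ := ∫ t in Set.Iic x, phi t

open ProbabilityTheory

lemma integral_eq_half_integral_add_comp_neg {G : Type*} [MeasurableSpace G] [AddGroup G]
    [MeasurableNeg G] {μ : Measure G} [μ.IsNegInvariant] {g : G → ℝ} (hg : Integrable g μ) :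
    ∫ x, g x ∂μ = (∫ x, (g x + g (-x)) ∂μ) / 2 := by
  rw [integral_add hg hg.comp_neg, integral_neg_eq_self]
  ring

lemma phi_eq_gaussianPDFReal : phi = gaussianPDFReal 0 1 := by
  ext x
  simp [phi, gaussianPDFReal]

lemma phi_pos (x : ℝ) : 0 < phi x := by
  rw [phi_eq_gaussianPDFReal]
  exact gaussianPDFReal_pos _ _ _ one_ne_zero

lemma phi_neg (x : ℝ) : phi (-x) = phi x := by
  simp [phi]

lemma integrable_phi : Integrable phi := by
  rw [phi_eq_gaussianPDFReal]
  exact integrable_gaussianPDFReal _ _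

lemma integral_phi : ∫ x, phi x = 1 := by
  rw [phi_eq_gaussianPDFReal]
  exact integral_gaussianPDFReal_eq_one _ one_ne_zero

lemma integrable_sq_mul_phi : Integrable fun x ↦ x ^ 2 * phi x := by
  have h := (memLp_id_gaussianReal (μ := 0) (v := 1) 2).integrable_sq
  rw [gaussianReal_of_var_ne_zero _ one_ne_zero, integrable_withDensity_iff_integrable_smul'
    (measurable_gaussianPDF _ _) (ae_of_all _ fun _ ↦ gaussianPDF_lt_top)] at h
  simpa [phi_eq_gaussianPDFReal, mul_comm] using h

lemma integral_sq_mul_phi : ∫ x, x ^ 2 * phi x = 1 := by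
  have hvar := variance_eq_sub (memLp_id_gaussianReal (μ := 0) (v := 1) 2)
  simp only [id, Pi.pow_apply] at hvar
  rw [variance_id_gaussianReal, integral_id_gaussianReal,
    integral_gaussianReal_eq_integral_smul one_ne_zero] at hvar
  rw [phi_eq_gaussianPDFReal]
  simpa [mul_comm] using hvar.symm

lemma log_phi (x : ℝ) : log (phi x) = -(log (2 * π) + x ^ 2) / 2 := by
  rw [phi, log_mul (by positivity) (exp_ne_zero _), log_inv, log_exp, log_sqrt (by positivity)]
  ring

lemma Phi_mono : Monotone Phi := fun _ _ hab ↦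
  setIntegral_mono_set integrable_phi.integrableOn (ae_of_all _ fun x ↦ (phi_pos x).le)
    (Iic_subset_Iic.2 hab).eventuallyLE

@[fun_prop]
lemma measurable_Phi : Measurable Phi := Phi_mono.measurable

lemma Phi_pos (x : ℝ) : 0 < Phi x := by
  rw [Phi, setIntegral_pos_iff_support_of_nonneg_ae (ae_of_all _ fun t ↦ (phi_pos t).le)
    integrable_phi.integrableOn, Function.support_eq_univ fun t ↦ (phi_pos t).ne', univ_inter,
    Real.volume_Iic]
  exact ENNReal.zero_lt_top

lemma Phi_add_Phi_neg (x : ℝ) : Phi x + Phi (-x) = 1 := by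
  have h : Phi (-x) = ∫ t in Ioi x, phi t :=
    calc Phi (-x) = ∫ t in Iic (-x), phi (-t) := by simp only [Phi, phi_neg]
      _ = ∫ t in Ioi x, phi t := by rw [integral_comp_neg_Iic, neg_neg]
  rw [h, ← integral_phi]
  exact intervalIntegral.integral_Iic_add_Ioi integrable_phi.integrableOn
    integrable_phi.integrableOn

lemma Phi_le_one (x : ℝ) : Phi x ≤ 1 := by
  linarith [Phi_add_Phi_neg x, Phi_pos (-x)]

lemma sub_half_le_mul_log_two_mul {p : ℝ} (hp : 0 < p) : p - 1 / 2 ≤ p * log (2 * p) := by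
  have h :=
    mul_le_mul_of_nonneg_left (one_sub_inv_le_log_of_pos (by positivity : 0 < 2 * p)) hp.le
  rw [mul_sub, mul_one, mul_inv, ← mul_assoc, mul_comm p, mul_assoc, mul_inv_cancel₀ hp.ne',
    mul_one] at h
  linarith

lemma abs_mul_log_two_mul_le_one {p : ℝ} (hp₀ : 0 < p) (hp₁ : p ≤ 1) :
    |p * log (2 * p)| ≤ 1 := by
  have h := mul_le_mul_of_nonneg_left (log_le_sub_one_of_pos (by positivity : 0 < 2 * p)) hp₀.le
  rw [abs_le]
  constructor <;> nlinarith [sub_half_le_mul_log_two_mul hp₀]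

lemma mul_log_two_mul_add_mul_log_two_mul_nonneg {p q : ℝ} (hp : 0 < p) (hq : 0 < q)
    (hpq : p + q = 1) : 0 ≤ p * log (2 * p) + q * log (2 * q) := by
  linarith [sub_half_le_mul_log_two_mul hp, sub_half_le_mul_log_two_mul hq]

noncomputable def skewNormalPDF (lam z : ℝ) : ℝ := 2 * phi z * Phi (lam * z)

section SkewNormal

variable (lam : ℝ)

lemma skewNormalPDF_add_skewNormalPDF_neg (z : ℝ) :
    skewNormalPDF lam z + skewNormalPDF lam (-z) = 2 * phi z := by
  have h := Phi_add_Phi_neg (lam * z)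
  rw [skewNormalPDF, skewNormalPDF, phi_neg, mul_neg]
  linear_combination 2 * phi z * h

lemma integrable_mul_skewNormalPDF {u : ℝ → ℝ} (hu : Integrable fun z ↦ u z * phi z) :
    Integrable fun z ↦ u z * skewNormalPDF lam z := by
  have hΦ : Measurable fun z ↦ 2 * Phi (lam * z) := by fun_prop
  refine (hu.mul_bdd (c := 2) hΦ.aestronglyMeasurable (ae_of_all _ fun z ↦ ?_)).congr
    (ae_of_all _ fun z ↦ ?_)
  · rw [norm_of_nonneg (by linarith [Phi_pos (lam * z)])]
    linarith [Phi_le_one (lam * z)]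
  · simp only [skewNormalPDF]
    ring

lemma integrable_skewNormalPDF : Integrable (skewNormalPDF lam) := by
  simpa using integrable_mul_skewNormalPDF lam (u := fun _ ↦ 1) (by simpa using integrable_phi)

lemma integral_mul_skewNormalPDF_of_even {u : ℝ → ℝ} (hu_even : ∀ z, u (-z) = u z)
    (hu : Integrable fun z ↦ u z * phi z) :
    ∫ z, u z * skewNormalPDF lam z = ∫ z, u z * phi z := by
  rw [integral_eq_half_integral_add_comp_neg (integrable_mul_skewNormalPDF lam hu),
    ← integral_div]
  congr 1 with z
  rw [hu_even, ← mul_add, skewNormalPDF_add_skewNormalPDF_neg]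
  ring

lemma integral_skewNormalPDF : ∫ z, skewNormalPDF lam z = 1 := by
  simpa [integral_phi] using integral_mul_skewNormalPDF_of_even lam (u := fun _ ↦ 1)
    (fun _ ↦ rfl) (by simpa using integrable_phi)

lemma integral_sq_mul_skewNormalPDF : ∫ z, z ^ 2 * skewNormalPDF lam z = 1 := by
  rw [integral_mul_skewNormalPDF_of_even lam (fun z ↦ neg_sq z) integrable_sq_mul_phi,
    integral_sq_mul_phi]

lemma integrable_log_two_mul_Phi_mul_skewNormalPDF :
    Integrable fun z ↦ log (2 * Phi (lam * z)) * skewNormalPDF lam z := by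
  have hm : Measurable fun z ↦ Phi (lam * z) * log (2 * Phi (lam * z)) := by fun_prop
  refine ((integrable_phi.const_mul 2).bdd_mul (c := 1) hm.aestronglyMeasurable
    (ae_of_all _ fun z ↦ abs_mul_log_two_mul_le_one (Phi_pos _) (Phi_le_one _))).congr
    (ae_of_all _ fun z ↦ ?_)
  simp only [skewNormalPDF]
  ring

lemma integral_log_two_mul_Phi_mul_skewNormalPDF_nonneg :
    0 ≤ ∫ z, log (2 * Phi (lam * z)) * skewNormalPDF lam z := by
  rw [integral_eq_half_integral_add_comp_neg (integrable_log_two_mul_Phi_mul_skewNormalPDF lam)]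
  refine div_nonneg (integral_nonneg fun z ↦ ?_) zero_le_two
  have hsum : Phi (lam * z) + Phi (lam * -z) = 1 := by
    rw [mul_neg]
    exact Phi_add_Phi_neg _
  have h :=
    mul_log_two_mul_add_mul_log_two_mul_nonneg (Phi_pos (lam * z)) (Phi_pos (lam * -z)) hsum
  have hphi := phi_pos z
  simp only [Pi.zero_apply, skewNormalPDF, phi_neg]
  nlinarith [mul_nonneg hphi.le h]

lemma log_skewNormalPDF (z : ℝ) :
    log (skewNormalPDF lam z) = log (2 * Phi (lam * z)) - (log (2 * π) + z ^ 2) / 2 := by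
  have := Phi_pos (lam * z)
  rw [skewNormalPDF, mul_right_comm, log_mul (by positivity) (phi_pos z).ne', log_phi]
  ring

lemma neg_integral_skewNormalPDF_mul_log :
    -∫ z, skewNormalPDF lam z * log (skewNormalPDF lam z) =
      log (2 * π * exp 1) / 2 - ∫ z, log (2 * Phi (lam * z)) * skewNormalPDF lam z := by
  have hf := integrable_skewNormalPDF lam
  have hsq := integrable_mul_skewNormalPDF lam integrable_sq_mul_phi
  have hpoint : ∀ z, skewNormalPDF lam z * log (skewNormalPDF lam z) =
      log (2 * Phi (lam * z)) * skewNormalPDF lam z -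
        (log (2 * π) / 2 * skewNormalPDF lam z + 1 / 2 * (z ^ 2 * skewNormalPDF lam z)) := by
    intro z
    rw [log_skewNormalPDF]
    ring
  have hrest : Integrable fun z ↦
      log (2 * π) / 2 * skewNormalPDF lam z + 1 / 2 * (z ^ 2 * skewNormalPDF lam z) :=
    (hf.const_mul _).add (hsq.const_mul _)
  simp_rw [hpoint]
  rw [integral_sub (integrable_log_two_mul_Phi_mul_skewNormalPDF lam) hrest,
    integral_add (hf.const_mul _) (hsq.const_mul _), integral_const_mul, integral_const_mul,
    integral_skewNormalPDF, integral_sq_mul_skewNormalPDF, log_mul (by positivity) (exp_ne_zero 1),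
    log_exp]
  ring

end SkewNormal

/-- For the standard skew-normal density f(z) = 2 φ(z) Φ(λ z), the negentropy
    E[ln(2Φ(λW))] (W with density f) is nonnegative, and hence
    S[f] ≤ S[φ] = (1/2) ln(2π e). -/
theorem skew_normal_negentropy_nonneg (lam : ℝ) :
    0 ≤ ∫ w : ℝ, Real.log (2 * Phi (lam * w)) * (2 * phi w * Phi (lam * w)) ∧
      -∫ z : ℝ, (2 * phi z * Phi (lam * z)) * Real.log (2 * phi z * Phi (lam * z)) ≤
        (1 / 2) * Real.log (2 * Real.pi * Real.exp 1) := by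
  have hN := integral_log_two_mul_Phi_mul_skewNormalPDF_nonneg lam
  have hS := neg_integral_skewNormalPDF_mul_log lam
  exact ⟨hN, by unfold skewNormalPDF at hN hS; linarith⟩
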